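/- arXiv:1002.3967 — 6 statements merged into one kernel-verified Lean document; each statement's English description precedes it below -/
import Mathlib

section
/- Let L(y) = Σ_{k=0}^{N} a_k(x) y^{(k)} with deg(a_k) ≤ k, and let λ_j be the coefficient of x^j in L(x^j). If λ_0, λ_1, …, λ_n are pairwise distinct, then there exists a unique monic polynomial p of degree n with L(p) = λ_n · p. -/
/-!
A linear map `L` on `K[X]` that does not raise degrees is upper triangular in the monomial basis,
with diagonal entries `λ_j = diagCoeff L j`. Comparing leading coefficients, an eigenvector of
degree `m` has eigenvalue `λ_m`; so when `λ_n` differs from the earlier `λ_m`, the map `L - λ_n`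
is injective, hence bijective, on the polynomials of degree `< n`. Uniqueness follows by applying
this to the difference of two solutions, existence by correcting `X ^ n` by the preimage of
`(L - λ_n) (X ^ n)`, which has degree `< n`.
-/

open Polynomial

namespace Polynomial

section DegreeNonincreasing

variable {R : Type*} [CommRing R] {L : R[X] →ₗ[R] R[X]}

noncomputable def diagCoeff (L : R[X] →ₗ[R] R[X]) (j : ℕ) : R := (L (X ^ j)).coeff j

lemma coeff_natDegree_apply_eq_diagCoeff_mul (hL : ∀ p, (L p).degree ≤ p.degree) (q : R[X]) :
    (L q).coeff q.natDegree = diagCoeff L q.natDegree * q.leadingCoeff := by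
  by_cases hq : q = 0
  · simp [hq]
  have hlow : (L q.eraseLead).degree < q.natDegree :=
    (hL _).trans_lt ((degree_eraseLead_lt hq).trans_eq (degree_eq_natDegree hq))
  conv_lhs => arg 1; rw [← q.eraseLead_add_C_mul_X_pow]
  rw [map_add, coeff_add, coeff_eq_zero_of_degree_lt hlow, C_mul_X_pow_eq_monomial,
    ← smul_X_eq_monomial, map_smul, coeff_smul, smul_eq_mul, zero_add, mul_comm, diagCoeff]

lemma diagCoeff_natDegree_eq_of_apply_eq_smul [IsDomain R] (hL : ∀ p, (L p).degree ≤ p.degree)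
    {q : R[X]} (hq : q ≠ 0) {c : R} (h : L q = c • q) : diagCoeff L q.natDegree = c := by
  refine mul_right_cancel₀ (leadingCoeff_ne_zero.2 hq) ?_
  rw [← coeff_natDegree_apply_eq_diagCoeff_mul hL, h, coeff_smul, smul_eq_mul, leadingCoeff]

lemma apply_X_pow_sub_smul_mem_degreeLT (hL : ∀ p, (L p).degree ≤ p.degree) (n : ℕ) :
    L (X ^ n) - diagCoeff L n • X ^ n ∈ degreeLT R n := by
  have hdeg : (L (X ^ n) - diagCoeff L n • X ^ n).degree ≤ (n : WithBot ℕ) :=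
    (degree_sub_le _ _).trans (max_le ((hL _).trans (degree_X_pow_le n))
      ((degree_smul_le _ _).trans (degree_X_pow_le n)))
  rw [mem_degreeLT, degree_lt_iff_coeff_zero]
  intro m hm
  rcases hm.eq_or_lt with rfl | hlt
  · simp [diagCoeff]
  · exact coeff_eq_zero_of_degree_lt (hdeg.trans_lt (by exact_mod_cast hlt))

variable [IsDomain R] {n : ℕ}

lemma eq_zero_of_degree_lt_of_apply_eq_smul (hL : ∀ p, (L p).degree ≤ p.degree)
    (hdiag : ∀ m < n, diagCoeff L m ≠ diagCoeff L n) {q : R[X]} (hdeg : q.degree < n)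
    (h : L q = diagCoeff L n • q) : q = 0 := by
  by_contra hq
  exact hdiag _ ((natDegree_lt_iff_degree_lt hq).2 hdeg)
    (diagCoeff_natDegree_eq_of_apply_eq_smul hL hq h)

lemma eq_of_monic_of_apply_eq_smul (hL : ∀ p, (L p).degree ≤ p.degree)
    (hdiag : ∀ m < n, diagCoeff L m ≠ diagCoeff L n) {p q : R[X]}
    (hp : p.Monic) (hpn : p.natDegree = n) (hLp : L p = diagCoeff L n • p)
    (hq : q.Monic) (hqn : q.natDegree = n) (hLq : L q = diagCoeff L n • q) : p = q := by
  have hdeg : (p - q).degree < n := by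
    rw [← hpn, ← degree_eq_natDegree hp.ne_zero]
    exact degree_sub_lt_left (by
      rw [degree_eq_natDegree hp.ne_zero, degree_eq_natDegree hq.ne_zero, hpn, hqn])
      hp.ne_zero (by rw [hp.leadingCoeff, hq.leadingCoeff])
  refine sub_eq_zero.1 (eq_zero_of_degree_lt_of_apply_eq_smul hL hdiag hdeg ?_)
  rw [map_sub, hLp, hLq, smul_sub]

end DegreeNonincreasing

section Field

variable {K : Type*} [Field K] {L : K[X] →ₗ[K] K[X]} {n : ℕ}

lemma exists_monic_natDegree_eq_apply_eq_smul (hL : ∀ p, (L p).degree ≤ p.degree)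
    (hdiag : ∀ m < n, diagCoeff L m ≠ diagCoeff L n) :
    ∃ p : K[X], p.Monic ∧ p.natDegree = n ∧ L p = diagCoeff L n • p := by
  set f := L - diagCoeff L n • LinearMap.id
  have hf : ∀ q ∈ degreeLT K n, f q ∈ degreeLT K n := fun q hq =>
    sub_mem (mem_degreeLT.2 ((hL q).trans_lt (mem_degreeLT.1 hq))) (Submodule.smul_mem _ _ hq)
  have hinj : Function.Injective (f.restrict hf) := by
    rw [← LinearMap.ker_eq_bot, LinearMap.ker_eq_bot']
    rintro ⟨q, hq⟩ hfq
    exact Subtype.ext (eq_zero_of_degree_lt_of_apply_eq_smul hL hdiag (mem_degreeLT.1 hq)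
      (sub_eq_zero.1 (congrArg Subtype.val hfq)))
  obtain ⟨⟨q, hq⟩, hfq⟩ := LinearMap.injective_iff_surjective.1 hinj
    ⟨_, apply_X_pow_sub_smul_mem_degreeLT hL n⟩
  have hqdeg : q.degree < (X ^ n : K[X]).degree := by rw [degree_X_pow]; exact mem_degreeLT.1 hq
  refine ⟨X ^ n - q, monic_X_pow_sub (mem_degreeLT.1 hq),
    natDegree_eq_of_degree_eq_some (by rw [degree_sub_eq_left_of_degree_lt hqdeg, degree_X_pow]),
    sub_eq_zero.1 ?_⟩
  change f (X ^ n - q) = 0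
  rw [map_sub, sub_eq_zero]
  exact (congrArg Subtype.val hfq).symm

lemma existsUnique_monic_natDegree_eq_apply_eq_smul (hL : ∀ p, (L p).degree ≤ p.degree)
    (hdiag : ∀ m < n, diagCoeff L m ≠ diagCoeff L n) :
    ∃! p : K[X], p.Monic ∧ p.natDegree = n ∧ L p = diagCoeff L n • p := by
  obtain ⟨p, hp⟩ := exists_monic_natDegree_eq_apply_eq_smul hL hdiag
  exact ⟨p, hp, fun q hq =>
    eq_of_monic_of_apply_eq_smul hL hdiag hq.1 hq.2.1 hq.2.2 hp.1 hp.2.1 hp.2.2⟩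

end Field

section DiffOp

variable {R : Type*} [CommSemiring R]

noncomputable def diffOp (a : ℕ → R[X]) (N : ℕ) : R[X] →ₗ[R] R[X] :=
  ∑ k ∈ Finset.range (N + 1), LinearMap.mulLeft R (a k) ∘ₗ derivative ^ k

lemma diffOp_apply (a : ℕ → R[X]) (N : ℕ) (p : R[X]) :
    diffOp a N p = ∑ k ∈ Finset.range (N + 1), a k * derivative^[k] p := by
  simp [diffOp, LinearMap.sum_apply, Module.End.pow_apply]

lemma degree_mul_iterate_derivative_le {a p : R[X]} {k : ℕ} (ha : a.degree ≤ k) :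
    (a * derivative^[k] p).degree ≤ p.degree := by
  by_cases hp : p = 0
  · simp [hp]
  rcases lt_or_ge p.natDegree k with hk | hk
  · simp [iterate_derivative_eq_zero hk]
  rw [degree_eq_natDegree hp]
  refine degree_le_of_natDegree_le (natDegree_mul_le.trans ?_)
  have := natDegree_le_of_degree_le ha
  have := natDegree_iterate_derivative p k
  omega

lemma degree_diffOp_le {a : ℕ → R[X]} {N : ℕ} (ha : ∀ k ≤ N, (a k).degree ≤ k) (p : R[X]) :
    (diffOp a N p).degree ≤ p.degree := by
  rw [diffOp_apply]
  exact (degree_sum_le _ _).trans (Finset.sup_le fun k hk =>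
    degree_mul_iterate_derivative_le (ha k (Finset.mem_range_succ_iff.1 hk)))

end DiffOp

end Polynomial

theorem stmt_2 (N n : ℕ) (a : ℕ → Polynomial ℝ)
    (ha : ∀ k, k ≤ N → (a k).degree ≤ (k : ℕ)) :
    let L : Polynomial ℝ → Polynomial ℝ :=
      fun p => ∑ k ∈ Finset.range (N + 1), a k * (Polynomial.derivative^[k] p)
    let lam : ℕ → ℝ := fun j => (L (X ^ j)).coeff j
    (∀ i j, i ≤ n → j ≤ n → i ≠ j → lam i ≠ lam j) →
      ∃! p : Polynomial ℝ, p.Monic ∧ p.natDegree = n ∧ L p = lam n • p := by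
  intro L lam hlam
  have hL : ⇑(diffOp a N) = L := funext (diffOp_apply a N)
  have hlam' : diagCoeff (diffOp a N) = lam := funext fun j => by rw [diagCoeff, hL]
  have hdiag : ∀ m < n, diagCoeff (diffOp a N) m ≠ diagCoeff (diffOp a N) n := by
    rw [hlam']
    exact fun m hm => hlam m n hm.le le_rfl hm.ne
  have key := existsUnique_monic_natDegree_eq_apply_eq_smul (degree_diffOp_le ha) hdiag
  rwa [hlam', hL] at key
end

section
/- For the operator L(y) = (x² + ε)y'' + (αx + β)y' with ε = ±1, the coefficient of x^n in L(x^n) is n(n−1) + αn. If α > 0, these values are pairwise distinct over n ≥ 0, so for every n there is a unique monic polynomial p_n of degree n with L(p_n) = (n(n−1)+αn)·p_n. -/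
open Polynomial

lemma coeffL (α β ε : ℝ) (p : ℝ[X]) (k : ℕ) :
    ((X ^ 2 + C ε) * (derivative (derivative p)) + (C α * X + C β) * derivative p).coeff k
      = ((k:ℝ)*((k:ℝ)-1) + α*k) * p.coeff k + β*((k:ℝ)+1)*p.coeff (k+1)
        + ε*(((k:ℝ)+1)*((k:ℝ)+2))*p.coeff (k+2) := by
  have h1 : (X ^ 2 + C ε) * (derivative (derivative p)) =
      derivative (derivative p) * X ^ 2 + C ε * derivative (derivative p) := by ring
  have h2 : (C α * X + C β) * derivative p =
      C α * (derivative p * X) + C β * derivative p := by ring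
  rw [h1, h2]
  simp only [coeff_add, coeff_C_mul, coeff_mul_X_pow']
  rcases k with _ | _ | k
  · simp only [mul_coeff_zero, coeff_X_zero, coeff_derivative]
    norm_num; ring
  · simp only [coeff_mul_X, coeff_derivative]
    norm_num; ring
  · simp only [coeff_mul_X, coeff_derivative, if_pos (by omega : 2 ≤ k + 2)]
    have : k + 2 - 2 = k := by omega
    rw [this]
    push_cast
    ring

noncomputable def Lmap (α β ε : ℝ) : ℝ[X] →ₗ[ℝ] ℝ[X] where
  toFun p := (X ^ 2 + C ε) * (derivative (derivative p)) + (C α * X + C β) * derivative p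
  map_add' p q := by simp [mul_add]; ring
  map_smul' c p := by
    simp only [smul_eq_C_mul, RingHom.id_apply, derivative_C_mul]
    ring

lemma lam_inj {α : ℝ} (hα : 0 < α) {m n : ℕ} (hmn : m ≠ n) :
    (m : ℝ) * (m - 1) + α * m ≠ (n : ℝ) * (n - 1) + α * n := by
  intro h
  have hfac : ((m:ℝ) - n) * ((m:ℝ) + n + α - 1) = 0 := by nlinarith
  rcases mul_eq_zero.1 hfac with h1 | h1
  · exact hmn (Nat.cast_injective (by linarith : (m:ℝ) = n))
  · have h2 : 1 ≤ m + n := by omega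
    have : (1:ℝ) ≤ (m:ℝ) + n := by exact_mod_cast h2
    linarith

-- T n p := L p - lam n • p ; coeff formula
lemma coeffT (α β ε : ℝ) (lamn : ℝ) (p : ℝ[X]) (k : ℕ) :
    (Lmap α β ε p - lamn • p).coeff k
      = ((k:ℝ)*((k:ℝ)-1) + α*k - lamn) * p.coeff k + β*((k:ℝ)+1)*p.coeff (k+1)
        + ε*(((k:ℝ)+1)*((k:ℝ)+2))*p.coeff (k+2) := by
  rw [coeff_sub, coeff_smul]
  show (((X ^ 2 + C ε) * (derivative (derivative p)) + (C α * X + C β) * derivative p).coeff k)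
      - lamn • p.coeff k = _
  rw [coeffL, smul_eq_mul]
  ring

lemma T_maps (α β ε : ℝ) (lamn : ℝ) (n : ℕ) :
    ∀ p ∈ degreeLT ℝ n, Lmap α β ε p - lamn • p ∈ degreeLT ℝ n := by
  intro p hp
  rw [mem_degreeLT, degree_lt_iff_coeff_zero] at hp ⊢
  intro m hm
  rw [coeffT, hp m hm, hp (m+1) (by omega), hp (m+2) (by omega)]
  ring

lemma T_inj {α : ℝ} (hα : 0 < α) (β ε : ℝ) (n : ℕ) (p : ℝ[X])
    (hdeg : p.degree < (n : WithBot ℕ))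
    (hT : Lmap α β ε p - ((n:ℝ)*((n:ℝ)-1) + α*n) • p = 0) : p = 0 := by
  by_contra hp0
  set d := p.natDegree with hd
  have hdn : d < n := natDegree_lt_iff_degree_lt hp0 |>.2 hdeg
  have h1 : p.coeff (d+1) = 0 := coeff_natDegree_succ_eq_zero
  have h2 : p.coeff (d+2) = 0 := coeff_eq_zero_of_natDegree_lt (by omega)
  have := coeffT α β ε ((n:ℝ)*((n:ℝ)-1) + α*n) p d
  rw [hT, coeff_zero, h1, h2] at this
  have hne : ((d:ℝ)*((d:ℝ)-1) + α*d) - ((n:ℝ)*((n:ℝ)-1) + α*n) ≠ 0 := by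
    have := lam_inj hα (by omega : d ≠ n)
    intro h; exact this (by linarith)
  have hlead : p.coeff d ≠ 0 := by
    rw [hd]; exact leadingCoeff_ne_zero.2 hp0
  have : ((d:ℝ)*((d:ℝ)-1) + α*d - ((n:ℝ)*((n:ℝ)-1) + α*n)) * p.coeff d = 0 := by
    linarith [this]
  exact (mul_ne_zero hne hlead) this

noncomputable instance (n : ℕ) : FiniteDimensional ℝ (degreeLT ℝ n) :=
  (degreeLTEquiv ℝ n).symm.finiteDimensional

lemma exists_unique_eigen {α : ℝ} (hα : 0 < α) (β ε : ℝ) (n : ℕ) :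
    ∃! p : ℝ[X], p.Monic ∧ p.natDegree = n ∧
      Lmap α β ε p = ((n:ℝ)*((n:ℝ)-1) + α*n) • p := by
  set lamn : ℝ := (n:ℝ)*((n:ℝ)-1) + α*n with hlamn
  set T : ℝ[X] →ₗ[ℝ] ℝ[X] := Lmap α β ε - lamn • LinearMap.id with hT
  have hTapp : ∀ p, T p = Lmap α β ε p - lamn • p := fun p => rfl
  have hmaps : ∀ p ∈ degreeLT ℝ n, T p ∈ degreeLT ℝ n := by
    intro p hp; rw [hTapp]; exact T_maps α β ε lamn n p hp
  set T' := T.restrict hmaps with hT'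
  have hinj : Function.Injective T' := by
    rw [← LinearMap.ker_eq_bot, LinearMap.ker_eq_bot']
    rintro ⟨p, hp⟩ hp0
    have hz : T p = 0 := by
      have := congrArg Subtype.val hp0
      simpa [hT', LinearMap.restrict_apply] using this
    rw [hTapp] at hz
    have := T_inj hα β ε n p (mem_degreeLT.1 hp) hz
    exact Subtype.ext this
  have hsurj : Function.Surjective T' := LinearMap.injective_iff_surjective.1 hinj
  have hq0 : T (X ^ n : ℝ[X]) ∈ degreeLT ℝ n := by
    rw [mem_degreeLT, degree_lt_iff_coeff_zero]
    intro m hm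
    rw [hTapp, coeffT]
    have h1 : (X ^ n : ℝ[X]).coeff (m+1) = 0 := by
      rw [coeff_X_pow]; simp; omega
    have h2 : (X ^ n : ℝ[X]).coeff (m+2) = 0 := by
      rw [coeff_X_pow]; simp; omega
    rw [h1, h2, coeff_X_pow]
    rcases eq_or_lt_of_le hm with h | h
    · rw [if_pos h.symm, ← h, hlamn]; ring
    · rw [if_neg (by omega)]; ring
  obtain ⟨⟨q, hq⟩, hTq⟩ := hsurj ⟨T (X ^ n), hq0⟩
  have hTq' : T q = T (X ^ n) := by
    have := congrArg Subtype.val hTq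
    simpa [hT', LinearMap.restrict_apply] using this
  have hqlt : q.degree < (n : WithBot ℕ) := mem_degreeLT.1 hq
  set p : ℝ[X] := X ^ n - q with hp
  have hmon : p.Monic := (monic_X_pow n).sub_of_left (by rwa [degree_X_pow])
  have hdeg : p.degree = (n : WithBot ℕ) := by
    rw [hp, degree_sub_eq_left_of_degree_lt (by rwa [degree_X_pow]), degree_X_pow]
  have hnd : p.natDegree = n := natDegree_eq_of_degree_eq_some hdeg
  have hTp : T p = 0 := by
    rw [hp, map_sub, hTq', sub_self]
  have heig : Lmap α β ε p = lamn • p := by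
    have := hTapp p; rw [hTp] at this; linear_combination -this
  refine ⟨p, ⟨hmon, hnd, heig⟩, ?_⟩
  rintro p' ⟨hmon', hnd', heig'⟩
  have hdeg' : p'.degree = (n : WithBot ℕ) := by
    rw [← hnd', degree_eq_natDegree hmon'.ne_zero]
  have hsublt : (p' - p).degree < (n : WithBot ℕ) := by
    calc (p' - p).degree < p'.degree :=
          degree_sub_lt (by rw [hdeg, hdeg']) hmon'.ne_zero (by rw [hmon.leadingCoeff, hmon'.leadingCoeff])
    _ = n := hdeg'
  have hTsub : Lmap α β ε (p' - p) - lamn • (p' - p) = 0 := by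
    rw [map_sub, heig, heig']; module
  have := T_inj hα β ε n (p' - p) hsublt hTsub
  exact sub_eq_zero.1 this

theorem stmt_4 (α β ε : ℝ) (hε : ε = 1 ∨ ε = -1) :
    let L : Polynomial ℝ → Polynomial ℝ :=
      fun p => (X ^ 2 + C ε) * (derivative (derivative p)) + (C α * X + C β) * derivative p
    (∀ n : ℕ, (L (X ^ n)).coeff n = n * (n - 1) + α * n) ∧
    (α > 0 →
      (∀ m n : ℕ, m ≠ n →
        (m : ℝ) * (m - 1) + α * m ≠ (n : ℝ) * (n - 1) + α * n) ∧
      (∀ n : ℕ, ∃! p : Polynomial ℝ, p.Monic ∧ p.natDegree = n ∧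
        L p = ((n : ℝ) * (n - 1) + α * n) • p)) := by
  intro L
  have hL : ∀ p, L p = Lmap α β ε p := fun p => rfl
  refine ⟨?_, fun hα => ⟨fun m n hmn => lam_inj hα hmn, fun n => ?_⟩⟩
  · intro n
    rw [show L (X ^ n) = (X ^ 2 + C ε) * (derivative (derivative (X ^ n)))
        + (C α * X + C β) * derivative (X ^ n) from rfl, coeffL]
    have h0 : (X ^ n : ℝ[X]).coeff n = 1 := by simp [coeff_X_pow]
    have h1 : (X ^ n : ℝ[X]).coeff (n+1) = 0 := by simp [coeff_X_pow]
    have h2 : (X ^ n : ℝ[X]).coeff (n+2) = 0 := by simp [coeff_X_pow]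
    rw [h0, h1, h2]; ring
  · simpa only [hL] using exists_unique_eigen hα β ε n
end

section
/- For the operator L(y) = y'' + (αx + β)y' with α ≠ 0, for every n ≥ 0 there is a unique monic polynomial p_n of degree n with L(p_n) = αn · p_n. -/
/-!
The operator `L = d²/dx² + (αx + β) d/dx` does not raise degrees and multiplies the top
coefficient of a polynomial of degree `m` by `αm`. Hence `L - αn` sends polynomials of degree
`≤ n` to polynomials of degree `< n`, and on the latter it is triangular in the monomial basis
with diagonal entries `α(m - n) ≠ 0`, hence bijective. So `Xⁿ` has exactly one correction `q`
of degree `< n` with `(L - αn)(Xⁿ + q) = 0`.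
-/

open Polynomial

namespace Polynomial

section CommRing

variable {R : Type*} [CommRing R]

noncomputable def hermiteOp (α β : R) : R[X] →ₗ[R] R[X] :=
  derivative ∘ₗ derivative + LinearMap.mulLeft R (C α * X + C β) ∘ₗ derivative

theorem hermiteOp_apply (α β : R) (p : R[X]) :
    hermiteOp α β p = derivative (derivative p) + (C α * X + C β) * derivative p :=
  rfl

theorem coeff_hermiteOp (α β : R) (p : R[X]) (k : ℕ) :
    (hermiteOp α β p).coeff k =
      α * k * p.coeff k + β * (k + 1) * p.coeff (k + 1)
        + (k + 1) * (k + 2) * p.coeff (k + 2) := by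
  rw [hermiteOp_apply, add_mul, mul_assoc]
  rcases k with _ | k
  · simp only [coeff_add, coeff_derivative, zero_add, Nat.reduceAdd, Nat.cast_one, Nat.cast_zero,
      mul_one, mul_coeff_zero, coeff_C_zero, coeff_X_zero, zero_mul, mul_zero, one_mul]
    ring
  · simp only [coeff_add, coeff_derivative, Nat.cast_add, Nat.cast_one, coeff_C_mul, coeff_X_mul]
    ring

theorem degree_hermiteOp_sub_smul_lt (α β : R) {n : ℕ} {p : R[X]} (hp : p.degree ≤ n) :
    (hermiteOp α β p - (α * n) • p).degree < n := by
  rw [degree_lt_iff_coeff_zero]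
  intro k hk
  have hcoeff : ∀ j, n < j → p.coeff j = 0 := fun j hj =>
    coeff_eq_zero_of_degree_lt (hp.trans_lt (by exact_mod_cast hj))
  rw [coeff_sub, coeff_smul, coeff_hermiteOp, hcoeff (k + 1) (by omega),
    hcoeff (k + 2) (by omega), smul_eq_mul]
  rcases hk.eq_or_lt with rfl | hlt
  · ring
  · rw [hcoeff k hlt]; ring

end CommRing

section Field

variable {K : Type*} [Field K] [CharZero K] {α : K} (β : K)

theorem eq_zero_of_hermiteOp_eq_smul_of_degree_lt (hα : α ≠ 0) {n : ℕ} {p : K[X]}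
    (h : hermiteOp α β p = (α * n) • p) (hpn : p.degree < n) : p = 0 := by
  by_contra hp
  have hlead := congr_arg (coeff · p.natDegree) h
  simp only [coeff_hermiteOp, coeff_smul, smul_eq_mul,
    coeff_eq_zero_of_natDegree_lt (Nat.lt_succ_self _),
    coeff_eq_zero_of_natDegree_lt (Nat.lt_add_of_pos_right two_pos), mul_zero, add_zero] at hlead
  have hnm : (p.natDegree : K) ≠ n := by
    exact_mod_cast ((natDegree_lt_iff_degree_lt hp).mpr hpn).ne
  exact hnm (mul_left_cancel₀ hα (mul_right_cancel₀ (leadingCoeff_ne_zero.mpr hp) hlead))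

theorem exists_hermiteOp_sub_smul_eq (hα : α ≠ 0) {n : ℕ} {r : K[X]} (hr : r.degree < n) :
    ∃ q : K[X], q.degree < n ∧ hermiteOp α β q - (α * n) • q = r := by
  set f := hermiteOp α β - (α * n) • LinearMap.id
  have hmaps : ∀ q ∈ degreeLT K n, f q ∈ degreeLT K n := fun q hq => by
    rw [mem_degreeLT] at hq ⊢
    exact degree_hermiteOp_sub_smul_lt α β hq.le
  have hinj : Set.InjOn f (degreeLT K n) := fun p hp q hq hpq => by
    rw [← sub_eq_zero]
    refine eq_zero_of_hermiteOp_eq_smul_of_degree_lt β hα ?_ (mem_degreeLT.mp (sub_mem hp hq))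
    rw [← sub_eq_zero, map_sub, smul_sub, sub_sub_sub_comm]
    exact sub_eq_zero.mpr hpq
  obtain ⟨q, hq, hfq⟩ := (LinearMap.injOn_iff_surjOn hmaps).mp hinj (mem_degreeLT.mpr hr)
  exact ⟨q, mem_degreeLT.mp hq, hfq⟩

theorem exists_monic_hermiteOp_eq_smul (hα : α ≠ 0) (n : ℕ) :
    ∃ p : K[X], p.Monic ∧ p.natDegree = n ∧ hermiteOp α β p = (α * n) • p := by
  have hr : (-(hermiteOp α β (X ^ n) - (α * n) • X ^ n)).degree < (n : WithBot ℕ) := by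
    rw [degree_neg]
    exact degree_hermiteOp_sub_smul_lt α β (degree_X_pow_le n)
  obtain ⟨q, hqn, hq⟩ := exists_hermiteOp_sub_smul_eq β hα hr
  refine ⟨X ^ n + q, monic_X_pow_add hqn, ?_, ?_⟩
  · rw [natDegree_add_eq_left_of_degree_lt (by rwa [degree_X_pow]), natDegree_X_pow]
  · rw [map_add, smul_add]
    linear_combination hq

theorem eq_of_monic_of_hermiteOp_eq_smul (hα : α ≠ 0) {n : ℕ} {p q : K[X]}
    (hp : p.Monic) (hq : q.Monic) (hpn : p.natDegree = n) (hqn : q.natDegree = n)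
    (hpL : hermiteOp α β p = (α * n) • p) (hqL : hermiteOp α β q = (α * n) • q) :
    p = q := by
  have hpq : p.degree = q.degree := by
    rw [degree_eq_natDegree hp.ne_zero, degree_eq_natDegree hq.ne_zero, hpn, hqn]
  have hdeg : (p - q).degree < n :=
    calc (p - q).degree < p.degree :=
          degree_sub_lt_left hpq hp.ne_zero (by rw [hp.leadingCoeff, hq.leadingCoeff])
      _ = n := by rw [degree_eq_natDegree hp.ne_zero, hpn]
  refine sub_eq_zero.mp (eq_zero_of_hermiteOp_eq_smul_of_degree_lt β hα ?_ hdeg)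
  rw [map_sub, smul_sub, hpL, hqL]

end Field

end Polynomial

theorem stmt_8 (α β : ℝ) (hα : α ≠ 0) :
    let L : Polynomial ℝ → Polynomial ℝ :=
      fun p => derivative (derivative p) + (C α * X + C β) * derivative p
    ∀ n : ℕ, ∃! p : Polynomial ℝ, p.Monic ∧ p.natDegree = n ∧ L p = (α * n) • p := by
  intro L n
  obtain ⟨p, hp, hpn, hpL⟩ := exists_monic_hermiteOp_eq_smul β hα n
  exact ⟨p, ⟨hp, hpn, hpL⟩, fun q ⟨hq, hqn, hqL⟩ =>
    eq_of_monic_of_hermiteOp_eq_smul β hα hq hp hqn hpn hqL hpL⟩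
end

section
/- Suppose α < β < −α. If P and Q are polynomial eigenfunctions of L(y) = (1−x²)y'' + (αx+β)y' with distinct eigenvalues, then ∫_{−1}^{1} p(x)P(x)Q(x) dx = 0, where p(x) = (1−x)^{−(β+α+2)/2}(1+x)^{(β−α−2)/2}. -/
/-!
With `w = (1 - x) ^ a * (1 + x) ^ b`, where `a = -(β + α + 2) / 2` and `b = (β - α - 2) / 2`
are both `> -1`, one has `((1 - x²) w)' = (α x + β) w`, so `L` is formally self-adjoint for `w`:
by the Lagrange identity, `w (P L Q - L P Q)` is the derivative of `(1 - x²) w W(P, Q)`, with `W`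
the Wronskian, and this vanishes at `±1` since the exponents `a + 1`, `b + 1` are positive. Hence
`(μ - λ) ∫ w P Q = ∫ w (P L Q - L P Q) = 0`.
-/

open Polynomial MeasureTheory Set

noncomputable def jacobiWeight (a b x : ℝ) : ℝ := (1 - x) ^ a * (1 + x) ^ b

noncomputable def jacobiOperator (α β : ℝ) (P : ℝ[X]) : ℝ[X] :=
  (1 - X ^ 2) * derivative (derivative P) + (C α * X + C β) * derivative P

section jacobiWeight

variable {a b : ℝ}

theorem continuous_jacobiWeight (ha : 0 ≤ a) (hb : 0 ≤ b) : Continuous (jacobiWeight a b) :=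
  ((Real.continuous_rpow_const ha).comp (continuous_const.sub continuous_id)).mul
    ((Real.continuous_rpow_const hb).comp (continuous_const.add continuous_id))

theorem jacobiWeight_one (ha : a ≠ 0) : jacobiWeight a b 1 = 0 := by
  simp [jacobiWeight, Real.zero_rpow ha]

theorem jacobiWeight_neg_one (hb : b ≠ 0) : jacobiWeight a b (-1) = 0 := by
  simp [jacobiWeight, Real.zero_rpow hb]

theorem jacobiWeight_add_one_add_one {x : ℝ} (hx : x ∈ Ioo (-1) 1) :
    jacobiWeight (a + 1) (b + 1) x = (1 - x ^ 2) * jacobiWeight a b x := by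
  simp only [jacobiWeight, Real.rpow_add_one (by linarith [hx.2] : 1 - x ≠ 0),
    Real.rpow_add_one (by linarith [hx.1] : 1 + x ≠ 0)]
  ring

theorem hasDerivAt_jacobiWeight_add_one {x : ℝ} (hx : x ∈ Ioo (-1) 1) :
    HasDerivAt (jacobiWeight (a + 1) (b + 1))
      (jacobiWeight a b x * (-(a + b + 2) * x + (b - a))) x := by
  have hx₁ : 0 < 1 - x := by linarith [hx.2]
  have hx₂ : 0 < 1 + x := by linarith [hx.1]
  have h₁ := ((hasDerivAt_id x).const_sub 1).rpow_const (p := a + 1) (Or.inl hx₁.ne')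
  have h₂ := ((hasDerivAt_id x).const_add 1).rpow_const (p := b + 1) (Or.inl hx₂.ne')
  refine (h₁.mul h₂).congr_deriv ?_
  simp only [jacobiWeight, id_eq, add_sub_cancel_right, Real.rpow_add_one hx₁.ne',
    Real.rpow_add_one hx₂.ne']
  ring

theorem intervalIntegrable_jacobiWeight_mul (ha : -1 < a) (hb : -1 < b) {f : ℝ → ℝ}
    (hf : Continuous f) :
    IntervalIntegrable (fun x => jacobiWeight a b x * f x) volume (-1) 1 := by
  have left : IntervalIntegrable (fun x => (1 + x) ^ b * ((1 - x) ^ a * f x)) volume (-1) 0 := by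
    refine IntervalIntegrable.mul_continuousOn ?_ ?_
    · simpa using (intervalIntegral.intervalIntegrable_rpow' (a := 0) (b := 1) hb).comp_add_left 1
    · refine ((continuousOn_const.sub continuousOn_id).rpow_const fun x hx => ?_).mul
        hf.continuousOn
      rw [uIcc_of_le (by norm_num)] at hx
      exact Or.inl (by linarith [hx.2] : (0 : ℝ) < 1 - x).ne'
  have right : IntervalIntegrable (fun x => (1 - x) ^ a * ((1 + x) ^ b * f x)) volume 0 1 := by
    refine IntervalIntegrable.mul_continuousOn ?_ ?_
    · simpa using
        ((intervalIntegral.intervalIntegrable_rpow' (a := 0) (b := 1) ha).comp_sub_left 1).symm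
    · refine ((continuousOn_const.add continuousOn_id).rpow_const fun x hx => ?_).mul
        hf.continuousOn
      rw [uIcc_of_le (by norm_num)] at hx
      exact Or.inl (by linarith [hx.1] : (0 : ℝ) < 1 + x).ne'
  refine IntervalIntegrable.trans (b := 0) ?_ ?_
  · convert left using 2; simp only [jacobiWeight]; ring
  · convert right using 2; simp only [jacobiWeight]; ring

end jacobiWeight

theorem jacobiOperator_lagrange_identity (α β : ℝ) (P Q : ℝ[X]) :
    (1 - X ^ 2) * derivative (wronskian P Q) + (C α * X + C β) * wronskian P Q
      = P * jacobiOperator α β Q - jacobiOperator α β P * Q := by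
  simp only [wronskian, jacobiOperator, derivative_sub, derivative_mul]
  ring

theorem integral_jacobiWeight_mul_sub_jacobiOperator_eq_zero {a b : ℝ} (ha : -1 < a)
    (hb : -1 < b) (P Q : ℝ[X]) :
    ∫ x in Ioo (-1) 1, jacobiWeight a b x *
      (P.eval x * (jacobiOperator (-(a + b + 2)) (b - a) Q).eval x
        - (jacobiOperator (-(a + b + 2)) (b - a) P).eval x * Q.eval x) = 0 := by
  set L := jacobiOperator (-(a + b + 2)) (b - a)
  set F : ℝ → ℝ := fun x => jacobiWeight (a + 1) (b + 1) x * (wronskian P Q).eval x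
  have hF : ∀ x ∈ Ioo (-1 : ℝ) 1,
      HasDerivAt F (jacobiWeight a b x * (P * L Q - L P * Q).eval x) x := by
    intro x hx
    refine ((hasDerivAt_jacobiWeight_add_one hx).mul
      ((wronskian P Q).hasDerivAt x)).congr_deriv ?_
    rw [← jacobiOperator_lagrange_identity, jacobiWeight_add_one_add_one hx]
    simp only [eval_add, eval_mul, eval_sub, eval_one, eval_pow, eval_X, eval_C]
    ring
  have hFc : Continuous F :=
    (continuous_jacobiWeight (by linarith) (by linarith)).mul (wronskian P Q).continuous
  have ftc := intervalIntegral.integral_eq_sub_of_hasDerivAt_of_le (by norm_num) hFc.continuousOn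
    (fun x hx => hF x hx)
    (intervalIntegrable_jacobiWeight_mul ha hb (P * L Q - L P * Q).continuous)
  rw [intervalIntegral.integral_of_le (by norm_num), integral_Ioc_eq_integral_Ioo] at ftc
  simpa [F, jacobiWeight_one (by linarith : a + 1 ≠ 0),
    jacobiWeight_neg_one (by linarith : b + 1 ≠ 0)] using ftc

theorem stmt_13 (α β : ℝ) (h1 : α < β) (h2 : β < -α)
    (P Q : Polynomial ℝ) (lam mu : ℝ) (hlm : lam ≠ mu)
    (hP : (1 - X ^ 2) * (derivative (derivative P)) + (C α * X + C β) * derivative P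
      = lam • P)
    (hQ : (1 - X ^ 2) * (derivative (derivative Q)) + (C α * X + C β) * derivative Q
      = mu • Q) :
    ∫ x in Set.Ioo (-1 : ℝ) 1,
      ((1 - x) ^ (-(β + α + 2) / 2) * (1 + x) ^ ((β - α - 2) / 2)) *
        P.eval x * Q.eval x = 0 := by
  set a := -(β + α + 2) / 2
  set b := (β - α - 2) / 2
  have hα : -(a + b + 2) = α := by ring
  have hβ : b - a = β := by ring
  have hsymm := integral_jacobiWeight_mul_sub_jacobiOperator_eq_zero (a := a) (b := b)
    (by linarith) (by linarith) P Q
  rw [hα, hβ, jacobiOperator, jacobiOperator, hP, hQ] at hsymm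
  have key : ∫ x in Ioo (-1) 1, (mu - lam) * (jacobiWeight a b x * P.eval x * Q.eval x) = 0 := by
    rw [← hsymm]
    congr 1 with x
    simp only [eval_smul, smul_eq_mul]
    ring
  rw [integral_const_mul, mul_eq_zero] at key
  exact key.resolve_left (sub_ne_zero.mpr hlm.symm)
end

section
/- Let L(y) = t(1−t)y'' + (1−t)y'. If y = (1−t)ψ with ψ a polynomial of degree n and L(y) = λy, then λ = −(n+1)². -/
/-! Writing `θ = X • d/dX` for the Euler operator, `L = d/dX ∘ θ - θ ∘ θ`. Since `θ`
multiplies the coefficient of `X ^ k` by `k`, the coefficient of `X ^ k` in `L p` is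
`(k + 1) ^ 2 p_{k+1} - k ^ 2 p_k`; at the degree `d` of `p` this is `-d ^ 2` times the leading
coefficient. So a polynomial eigenfunction of degree `d` has eigenvalue `-d ^ 2`, and
`(1 - X) ψ` has degree `n + 1`. -/

open Polynomial

variable {R : Type*}

section CommRing

variable [CommRing R]

/-- The hypergeometric operator `t(1-t)y'' + (c - (a+b+1)t)y' - ab y` with `a = b = 0`, `c = 1`. -/
noncomputable def hypergeomOp (p : R[X]) : R[X] :=
  X * (1 - X) * derivative (derivative p) + (1 - X) * derivative p

theorem coeff_X_mul_derivative (p : R[X]) (k : ℕ) :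
    (X * derivative p).coeff k = k * p.coeff k := by
  cases k with
  | zero => simp
  | succ k => rw [coeff_X_mul, coeff_derivative]; push_cast; ring

theorem hypergeomOp_eq (p : R[X]) :
    hypergeomOp p = derivative (X * derivative p) - X * derivative (X * derivative p) := by
  simp only [hypergeomOp, derivative_mul, derivative_X, one_mul]
  ring

theorem coeff_hypergeomOp (p : R[X]) (k : ℕ) :
    (hypergeomOp p).coeff k = ((k : R) + 1) ^ 2 * p.coeff (k + 1) - (k : R) ^ 2 * p.coeff k := by
  rw [hypergeomOp_eq, coeff_sub, coeff_X_mul_derivative, coeff_derivative,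
    coeff_X_mul_derivative, coeff_X_mul_derivative]
  push_cast
  ring

theorem coeff_hypergeomOp_natDegree (p : R[X]) :
    (hypergeomOp p).coeff p.natDegree = -((p.natDegree : R) ^ 2) * p.leadingCoeff := by
  rw [coeff_hypergeomOp, coeff_eq_zero_of_natDegree_lt (Nat.lt_succ_self _), leadingCoeff]
  ring

section IsDomain

variable [IsDomain R]

theorem eq_neg_natDegree_sq_of_hypergeomOp_eq_smul {p : R[X]} (hp : p ≠ 0) {lam : R}
    (h : hypergeomOp p = lam • p) : lam = -((p.natDegree : R) ^ 2) := by
  have hcoeff := congrArg (coeff · p.natDegree) h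
  simp only [coeff_hypergeomOp_natDegree, coeff_smul, smul_eq_mul] at hcoeff
  exact (mul_right_cancel₀ (leadingCoeff_ne_zero.mpr hp) hcoeff).symm

theorem one_sub_X_mul_ne_zero {ψ : R[X]} (hψ : ψ ≠ 0) : (1 - X) * ψ ≠ 0 := by
  rw [← neg_sub, neg_mul, neg_ne_zero, ← C_1]
  exact mul_ne_zero (X_sub_C_ne_zero 1) hψ

theorem natDegree_one_sub_X_mul {ψ : R[X]} (hψ : ψ ≠ 0) :
    ((1 - X) * ψ).natDegree = ψ.natDegree + 1 := by
  rw [← neg_sub, neg_mul, natDegree_neg, ← C_1, natDegree_mul (X_sub_C_ne_zero 1) hψ,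
    natDegree_X_sub_C, add_comm]

end IsDomain

end CommRing

theorem stmt_17 (n : ℕ) (ψ : Polynomial ℝ) (hψ : ψ ≠ 0) (hdeg : ψ.natDegree = n)
    (lam : ℝ)
    (h : X * (1 - X) * (derivative (derivative ((1 - X) * ψ))) +
        (1 - X) * derivative ((1 - X) * ψ) = lam • ((1 - X) * ψ)) :
    lam = -((n : ℝ) + 1) ^ 2 := by
  rw [eq_neg_natDegree_sq_of_hypergeomOp_eq_smul (one_sub_X_mul_ne_zero hψ) h,
    natDegree_one_sub_X_mul hψ, hdeg]
  push_cast
  ring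
end

section
/- Let L(y) = (1+x²)y'' + (αx+β)y' and p(x) = (x²+1)^{(α−2)/2} e^{β arctan x}. If P and Q are polynomial eigenfunctions of L with distinct eigenvalues and deg(P) + deg(Q) + α − 1 < 0, then ∫_{−∞}^{∞} p(x)P(x)Q(x) dx converges and equals 0. -/
open Polynomial MeasureTheory Filter Topology

lemma poly_bound (R : Polynomial ℝ) (e : ℝ) (he : (R.natDegree : ℝ) ≤ e) :
    ∃ C : ℝ, 0 ≤ C ∧ ∀ x : ℝ, |R.eval x| ≤ C * (x ^ 2 + 1) ^ (e / 2) := by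
  refine ⟨∑ i ∈ Finset.range (R.natDegree + 1), |R.coeff i|,
    Finset.sum_nonneg fun i _ => abs_nonneg _, fun x => ?_⟩
  have h1 : (0:ℝ) < x ^ 2 + 1 := by positivity
  have h1' : (1:ℝ) ≤ x ^ 2 + 1 := by nlinarith [sq_nonneg x]
  rw [Polynomial.eval_eq_sum_range]
  refine (Finset.abs_sum_le_sum_abs _ _).trans ?_
  rw [Finset.sum_mul]
  refine Finset.sum_le_sum fun i hi => ?_
  rw [abs_mul, abs_pow]
  refine mul_le_mul_of_nonneg_left ?_ (abs_nonneg _)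
  have hx : |x| ≤ (x ^ 2 + 1) ^ ((1:ℝ)/2) := by
    rw [← Real.sqrt_eq_rpow, ← Real.sqrt_sq_eq_abs]
    exact Real.sqrt_le_sqrt (by linarith)
  calc |x| ^ i ≤ ((x ^ 2 + 1) ^ ((1:ℝ)/2)) ^ i := pow_le_pow_left₀ (abs_nonneg x) hx i
    _ = (x ^ 2 + 1) ^ ((i:ℝ)/2) := by
        rw [← Real.rpow_natCast ((x ^ 2 + 1) ^ ((1:ℝ)/2)) i, ← Real.rpow_mul h1.le]
        rw [show (1:ℝ)/2 * i = (i:ℝ)/2 by ring]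
    _ ≤ (x ^ 2 + 1) ^ (e/2) := by
        apply Real.rpow_le_rpow_of_exponent_le h1'
        have : (i:ℝ) ≤ R.natDegree := by
          exact_mod_cast Nat.lt_succ_iff.mp (Finset.mem_range.mp hi)
        linarith

theorem stmt_19 (α β : ℝ) (P Q : Polynomial ℝ) (lam mu : ℝ) (hlm : lam ≠ mu)
    (hP : (1 + X ^ 2) * (derivative (derivative P)) + (C α * X + C β) * derivative P
      = lam • P)
    (hQ : (1 + X ^ 2) * (derivative (derivative Q)) + (C α * X + C β) * derivative Q
      = mu • Q)
    (hdeg : (P.natDegree : ℝ) + Q.natDegree + α - 1 < 0) :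
    let p : ℝ → ℝ := fun x => (x ^ 2 + 1) ^ ((α - 2) / 2) * Real.exp (β * Real.arctan x)
    Integrable (fun x => p x * P.eval x * Q.eval x) volume ∧
    ∫ x : ℝ, p x * P.eval x * Q.eval x = 0 := by
  intro p
  set f : ℝ → ℝ := fun x => p x * P.eval x * Q.eval x with hf
  have h1 : ∀ x : ℝ, (0:ℝ) < x ^ 2 + 1 := fun x => by positivity
  have h1' : ∀ x : ℝ, (1:ℝ) ≤ x ^ 2 + 1 := fun x => by nlinarith [sq_nonneg x]
  -- exp bound
  have hexp_bd : ∀ x : ℝ, Real.exp (β * Real.arctan x) ≤ Real.exp (|β| * (Real.pi/2)) := by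
    intro x
    apply Real.exp_le_exp.2
    calc β * Real.arctan x ≤ |β * Real.arctan x| := le_abs_self _
      _ = |β| * |Real.arctan x| := abs_mul _ _
      _ ≤ |β| * (Real.pi/2) := by
          refine mul_le_mul_of_nonneg_left ?_ (abs_nonneg β)
          rw [abs_le]
          exact ⟨(Real.neg_pi_div_two_lt_arctan x).le, (Real.arctan_lt_pi_div_two x).le⟩
  -- bounds on P, Q
  obtain ⟨CP, hCP0, hCP⟩ := poly_bound P P.natDegree le_rfl
  obtain ⟨CQ, hCQ0, hCQ⟩ := poly_bound Q Q.natDegree le_rfl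
  -- integrability
  have hcont : Continuous f := by
    apply Continuous.mul
    apply Continuous.mul
    · exact (Continuous.rpow_const (by continuity) (fun x => Or.inl (h1 x).ne')).mul
        (Real.continuous_exp.comp (continuous_const.mul Real.continuous_arctan))
    · exact P.continuous_aeval
    · exact Q.continuous_aeval
  have hfbd : ∀ x : ℝ, |f x| ≤ (Real.exp (|β| * (Real.pi/2)) * CP * CQ) *
      (x ^ 2 + 1) ^ ((P.natDegree + Q.natDegree + α - 2) / 2) := by
    intro x
    have e1 : |p x| = (x ^ 2 + 1) ^ ((α-2)/2) * Real.exp (β * Real.arctan x) := by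
      rw [abs_of_nonneg]
      positivity
    have key : (x ^ 2 + 1) ^ ((α-2)/2) * (x ^ 2 + 1) ^ ((P.natDegree:ℝ)/2)
        * (x ^ 2 + 1) ^ ((Q.natDegree:ℝ)/2)
        = (x ^ 2 + 1) ^ ((P.natDegree + Q.natDegree + α - 2) / 2) := by
      rw [← Real.rpow_add (h1 x), ← Real.rpow_add (h1 x)]
      ring_nf
    calc |f x| = |p x| * |P.eval x| * |Q.eval x| := by rw [hf]; simp [abs_mul]
      _ ≤ ((x ^ 2 + 1) ^ ((α-2)/2) * Real.exp (|β| * (Real.pi/2)))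
          * (CP * (x ^ 2 + 1) ^ ((P.natDegree:ℝ)/2))
          * (CQ * (x ^ 2 + 1) ^ ((Q.natDegree:ℝ)/2)) := by
        apply mul_le_mul
        apply mul_le_mul
        · rw [e1]
          exact mul_le_mul_of_nonneg_left (hexp_bd x) (by positivity)
        · exact hCP x
        · exact abs_nonneg _
        · positivity
        · exact hCQ x
        · exact abs_nonneg _
        · positivity
      _ = (Real.exp (|β| * (Real.pi/2)) * CP * CQ) *
          ((x ^ 2 + 1) ^ ((α-2)/2) * (x ^ 2 + 1) ^ ((P.natDegree:ℝ)/2)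
          * (x ^ 2 + 1) ^ ((Q.natDegree:ℝ)/2)) := by ring
      _ = _ := by rw [key]
  have hInt : Integrable f := by
    set r : ℝ := -(P.natDegree + Q.natDegree + α - 2) with hr
    have hr1 : (Module.finrank ℝ ℝ : ℝ) < r := by
      simp only [Module.finrank_self, Nat.cast_one]
      rw [hr]; linarith
    have hIg : Integrable (fun x : ℝ => ((1:ℝ) + ‖x‖ ^ 2) ^ (-r / 2)) volume :=
      integrable_rpow_neg_one_add_norm_sq hr1
    refine (hIg.const_mul (Real.exp (|β| * (Real.pi/2)) * CP * CQ)).mono'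
      hcont.aestronglyMeasurable (ae_of_all _ fun x => ?_)
    rw [Real.norm_eq_abs]
    refine (hfbd x).trans ?_
    have : ((1:ℝ) + ‖x‖ ^ 2) ^ (-r / 2)
        = (x ^ 2 + 1) ^ ((P.natDegree + Q.natDegree + α - 2) / 2) := by
      rw [Real.norm_eq_abs, sq_abs]
      rw [show (1:ℝ) + x ^ 2 = x ^ 2 + 1 by ring,
        show -r/2 = (P.natDegree + Q.natDegree + α - 2) / 2 by rw [hr]; ring]
    rw [this]
  refine ⟨hInt, ?_⟩
  -- pointwise eigen equations
  have hPx : ∀ x : ℝ, (1 + x^2) * (derivative (derivative P)).eval x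
      + (α * x + β) * (derivative P).eval x = lam * P.eval x := by
    intro x
    have := congrArg (Polynomial.eval x) hP
    simpa [Polynomial.eval_mul, Polynomial.eval_add, smul_eq_mul] using this
  have hQx : ∀ x : ℝ, (1 + x^2) * (derivative (derivative Q)).eval x
      + (α * x + β) * (derivative Q).eval x = mu * Q.eval x := by
    intro x
    have := congrArg (Polynomial.eval x) hQ
    simpa [Polynomial.eval_mul, Polynomial.eval_add, smul_eq_mul] using this
  set g : ℝ → ℝ := fun x => (x^2+1) ^ (α/2) * Real.exp (β * Real.arctan x)
    * (derivative P * Q - P * derivative Q).eval x with hg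
  -- derivative of g
  have hgderiv : ∀ x : ℝ, HasDerivAt g ((lam - mu) * f x) x := by
    intro x
    have ht := h1 x
    have hx2 : HasDerivAt (fun x : ℝ => x ^ 2 + 1) (2 * x) x := by
      simpa using (hasDerivAt_pow 2 x).add_const 1
    have hrpow := hx2.rpow_const (p := α/2) (Or.inl ht.ne')
    have hexp : HasDerivAt (fun x : ℝ => Real.exp (β * Real.arctan x))
        (Real.exp (β * Real.arctan x) * (β * (1/(1+x^2)))) x :=
      ((Real.hasDerivAt_arctan x).const_mul β).exp
    have hW := (derivative P * Q - P * derivative Q).hasDerivAt x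
    have total := (hrpow.mul hexp).mul hW
    have hval : (2 * x * (α/2) * (x^2+1) ^ (α/2 - 1) * Real.exp (β * Real.arctan x)
        + (x^2+1) ^ (α/2) * (Real.exp (β * Real.arctan x) * (β * (1/(1+x^2)))))
        * (derivative P * Q - P * derivative Q).eval x
        + ((x^2+1) ^ (α/2) * Real.exp (β * Real.arctan x))
          * (derivative (derivative P * Q - P * derivative Q)).eval x
        = (lam - mu) * f x := by
      have hfx : f x = (x ^ 2 + 1) ^ ((α - 2) / 2) * Real.exp (β * Real.arctan x)
          * P.eval x * Q.eval x := rfl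
      rw [hfx]
      have hA : (x^2+1:ℝ) ^ (α/2 - 1) = (x^2+1) ^ ((α-2)/2) := by
        rw [show α/2-1 = (α-2)/2 by ring]
      have hB : (x^2+1:ℝ) ^ (α/2) = (x^2+1) ^ ((α-2)/2) * (x^2+1) := by
        rw [show α/2 = (α-2)/2 + 1 by ring, Real.rpow_add ht, Real.rpow_one]
      have hW'x : (derivative (derivative P * Q - P * derivative Q)).eval x
          = (derivative (derivative P)).eval x * Q.eval x
            - P.eval x * (derivative (derivative Q)).eval x := by
        simp [Polynomial.derivative_mul]; ring
      have hne : (1:ℝ) + x^2 ≠ 0 := by positivity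
      have hterm : (x^2+1:ℝ) ^ (α/2) * (Real.exp (β * Real.arctan x) * (β * (1/(1+x^2))))
          = (x^2+1) ^ ((α-2)/2) * Real.exp (β * Real.arctan x) * β := by
        rw [hB]; field_simp; ring
      rw [hterm, hA, hB, hW'x]
      simp only [Polynomial.eval_sub, Polynomial.eval_mul]
      linear_combination ((x^2+1) ^ ((α-2)/2) * Real.exp (β * Real.arctan x) * Q.eval x) * hPx x
        - ((x^2+1) ^ ((α-2)/2) * Real.exp (β * Real.arctan x) * P.eval x) * hQx x
    exact hval ▸ total
  -- bound on the Wronskian-type polynomial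
  have bd1 : ∃ C, 0 ≤ C ∧ ∀ x : ℝ, |(derivative P * Q).eval x|
      ≤ C * (x^2+1) ^ (((P.natDegree:ℝ) + Q.natDegree - 1)/2) := by
    by_cases hd : derivative P = 0
    · exact ⟨0, le_rfl, fun x => by simp [hd]⟩
    · apply poly_bound
      have h5 : P.natDegree ≠ 0 := fun h => hd (by
        rw [Polynomial.eq_C_of_natDegree_eq_zero h]; simp)
      have h6 : (derivative P).natDegree < P.natDegree := Polynomial.natDegree_derivative_lt h5
      have h7 : ((derivative P).natDegree : ℝ) + 1 ≤ P.natDegree := by exact_mod_cast h6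
      have h8 : ((derivative P * Q).natDegree : ℝ)
          ≤ (derivative P).natDegree + Q.natDegree := by
        exact_mod_cast Polynomial.natDegree_mul_le
      linarith
  have bd2 : ∃ C, 0 ≤ C ∧ ∀ x : ℝ, |(P * derivative Q).eval x|
      ≤ C * (x^2+1) ^ (((P.natDegree:ℝ) + Q.natDegree - 1)/2) := by
    by_cases hd : derivative Q = 0
    · exact ⟨0, le_rfl, fun x => by simp [hd]⟩
    · apply poly_bound
      have h5 : Q.natDegree ≠ 0 := fun h => hd (by
        rw [Polynomial.eq_C_of_natDegree_eq_zero h]; simp)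
      have h6 : (derivative Q).natDegree < Q.natDegree := Polynomial.natDegree_derivative_lt h5
      have h7 : ((derivative Q).natDegree : ℝ) + 1 ≤ Q.natDegree := by exact_mod_cast h6
      have h8 : ((P * derivative Q).natDegree : ℝ)
          ≤ P.natDegree + (derivative Q).natDegree := by
        exact_mod_cast Polynomial.natDegree_mul_le
      linarith
  obtain ⟨C1, hC10, hC1⟩ := bd1
  obtain ⟨C2, hC20, hC2⟩ := bd2
  -- bound on g
  have hgbd : ∀ x : ℝ, |g x| ≤ (Real.exp (|β| * (Real.pi/2)) * (C1 + C2)) *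
      (x^2+1) ^ (((P.natDegree:ℝ) + Q.natDegree + α - 1)/2) := by
    intro x
    have hWb : |(derivative P * Q - P * derivative Q).eval x|
        ≤ (C1+C2) * (x^2+1) ^ (((P.natDegree:ℝ) + Q.natDegree - 1)/2) := by
      rw [Polynomial.eval_sub, add_mul]
      exact (abs_sub _ _).trans (add_le_add (hC1 x) (hC2 x))
    have hkey : (x ^ 2 + 1) ^ (α/2) * (x^2+1) ^ (((P.natDegree:ℝ) + Q.natDegree - 1)/2)
        = (x ^ 2 + 1) ^ (((P.natDegree:ℝ) + Q.natDegree + α - 1) / 2) := by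
      rw [← Real.rpow_add (h1 x)]; ring_nf
    have e0 : |g x| = (x^2+1) ^ (α/2) * Real.exp (β * Real.arctan x)
        * |(derivative P * Q - P * derivative Q).eval x| := by
      simp only [hg]
      rw [abs_mul, abs_mul, abs_of_nonneg (by positivity : (0:ℝ) ≤ (x^2+1) ^ (α/2)),
        abs_of_nonneg (Real.exp_nonneg _)]
    have step : |g x| ≤ ((x^2+1) ^ (α/2) * Real.exp (|β| * (Real.pi/2)))
        * ((C1+C2) * (x^2+1) ^ (((P.natDegree:ℝ) + Q.natDegree - 1)/2)) := by
      rw [e0]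
      exact mul_le_mul
        (mul_le_mul_of_nonneg_left (hexp_bd x)
          (by positivity : (0:ℝ) ≤ (x^2+1) ^ (α/2)))
        hWb (abs_nonneg _) (by positivity)
    refine step.trans (le_of_eq ?_)
    rw [← hkey]; ring
  -- limits of g
  have hts : ∀ l : Filter ℝ, Tendsto (fun x : ℝ => |x|) l atTop → Tendsto g l (𝓝 0) := by
    intro l hl
    have habs : Tendsto (fun x : ℝ => x ^ 2 + 1) l atTop := by
      apply tendsto_atTop_mono (fun x => ?_) hl
      nlinarith [sq_nonneg (|x| - 1), sq_abs x]
    have hrp : Tendsto (fun y : ℝ => y ^ (((P.natDegree:ℝ) + Q.natDegree + α - 1)/2))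
        atTop (𝓝 0) := by
      have := tendsto_rpow_neg_atTop
        (show (0:ℝ) < -(((P.natDegree:ℝ) + Q.natDegree + α - 1)/2) by linarith)
      simpa [neg_neg] using this
    have h2 : Tendsto (fun x : ℝ => (Real.exp (|β| * (Real.pi/2)) * (C1 + C2)) *
        (x^2+1) ^ (((P.natDegree:ℝ) + Q.natDegree + α - 1)/2)) l (𝓝 0) := by
      simpa using (hrp.comp habs).const_mul (Real.exp (|β| * (Real.pi/2)) * (C1 + C2))
    exact squeeze_zero_norm (fun x => by simpa [Real.norm_eq_abs] using hgbd x) h2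
  have htop : Tendsto g atTop (𝓝 0) := hts atTop tendsto_abs_atTop_atTop
  have hbot : Tendsto g atBot (𝓝 0) := hts atBot tendsto_abs_atBot_atTop
  -- FTC
  have key := integral_of_hasDerivAt_of_tendsto hgderiv (hInt.const_mul (lam - mu)) hbot htop
  rw [integral_const_mul] at key
  have h0 : (lam - mu) * ∫ x, f x = 0 := by simpa using key
  rcases mul_eq_zero.mp h0 with h | h
  · exact absurd (sub_eq_zero.mp h) hlm
  · exact h
end
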